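/- For the StackMST(0,0) game with red tree T with nonnegative edge costs, for every vertex s of T let μ(s) denote the maximum cost of a red edge incident to s. Then for every vertex s, the optimal revenue satisfies r*(T, c) ≥ (4/7)·(c(T) − μ(s)). -/

import Mathlib

namespace StackMST

variable {V : Type*}

/-- Sum of an edge-weight function over a set of edges. -/
noncomputable def esum (w : Sym2 V → ℝ) (s : Set (Sym2 V)) : ℝ := ∑ᶠ e ∈ s, w e

/-- `M` is a spanning tree of `G`. -/
def IsSpanningTreeOf (G M : SimpleGraph V) : Prop := M ≤ G ∧ M.IsTree

/-- Total weight of `M`, where red edges (the edges of `T`) are weighted by `c`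
and all other (blue) edges are weighted by `p`. -/
noncomputable def weight (T : SimpleGraph V) (c p : Sym2 V → ℝ) (M : SimpleGraph V) : ℝ :=
  esum c (M.edgeSet ∩ T.edgeSet) + esum p (M.edgeSet \ T.edgeSet)

/-- Total price of the blue edges of `M`. -/
noncomputable def blueRevenue (T : SimpleGraph V) (p : Sym2 V → ℝ) (M : SimpleGraph V) : ℝ :=
  esum p (M.edgeSet \ T.edgeSet)

/-- The leader's revenue once `F` and `p` are fixed: the follower selects a
minimum-weight spanning tree of `T ⊔ F` and, among those, one maximizing the
total price of the blue edges it contains. -/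
noncomputable def followerRevenue (T : SimpleGraph V) (c : Sym2 V → ℝ)
    (F : SimpleGraph V) (p : Sym2 V → ℝ) : ℝ :=
  sSup {r | ∃ M : SimpleGraph V, IsSpanningTreeOf (T ⊔ F) M ∧
    (∀ M' : SimpleGraph V, IsSpanningTreeOf (T ⊔ F) M' →
        weight T c p M ≤ weight T c p M') ∧
    r = blueRevenue T p M}

/-- `F` is a set of blue edges: none of its edges is a red edge. -/
def IsBlueSet (T F : SimpleGraph V) : Prop := F ≤ Tᶜ

/-- `r(F)`: the best revenue the leader can obtain from the activated set `F`. -/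
noncomputable def revenueOf (T : SimpleGraph V) (c : Sym2 V → ℝ) (F : SimpleGraph V) : ℝ :=
  sSup {r | ∃ p : Sym2 V → ℝ, (∀ e ∈ F.edgeSet, 0 ≤ p e) ∧ r = followerRevenue T c F p}

/-- Optimal revenue `r*(T, c)` of the StackMST(0,0) game on the red tree `T`. -/
noncomputable def optRevenue (T : SimpleGraph V) (c : Sym2 V → ℝ) : ℝ :=
  sSup {r | ∃ (F : SimpleGraph V) (p : Sym2 V → ℝ), IsBlueSet T F ∧
    (∀ e ∈ F.edgeSet, 0 ≤ p e) ∧ r = followerRevenue T c F p}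

/-- Total cost `c(T)` of the red edges. -/
noncomputable def redCost (T : SimpleGraph V) (c : Sym2 V → ℝ) : ℝ := esum c T.edgeSet

/-- Optimal revenue of the budgeted game StackMST(γ, Δ). -/
noncomputable def gammaOptRevenue (T : SimpleGraph V) (c γ : Sym2 V → ℝ) (Δ : ℝ) : ℝ :=
  sSup {r | ∃ F : SimpleGraph V, IsBlueSet T F ∧ esum γ F.edgeSet ≤ Δ ∧
    r = revenueOf T c F}

end StackMST

namespace StackMST

/-- `μ(s)`: the maximum cost of a red edge of `T` incident to the vertex `s`. -/
noncomputable def maxIncidentCost {V : Type*} (T : SimpleGraph V) (c : Sym2 V → ℝ)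
    (s : V) : ℝ :=
  sSup {x | ∃ e ∈ T.edgeSet, s ∈ e ∧ x = c e}

end StackMST

/-!
Two pricing strategies are compared. Each is certified by a spanning tree of red and blue edges,
with red edges priced at cost, in which the ends of every red edge `xy` are joined by tree edges
of price at most `c(xy)`; by the cycle property this tree has minimum weight, so the leader earns
at least the prices of its blue edges.

The Kruskal strategy splits `T` at its most expensive edge, solves both halves recursively and
rejoins them by a blue edge priced at the cost of the removed edge. Only red edges that are
strict local minima survive; they form a matching `K`, and the revenue is `c(T) − c(K)`.

Let `m(v)` be the cheapest red cost at `v`. The star strategy joins every `v ≠ s` to a parent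
among `s` and the ends of the cheapest red edge `e₀` by a blue edge priced `m(v)`, keeping only
`e₀`; it earns `∑ m − m(s) − c(e₀) ≥ 2 c(K) − 2 m(s)`, since both ends of a matching edge `g`
have `m = c(g)`. Averaging the two revenues with weights `2/3, 1/3` gives
`r* ≥ (2/3)(c(T) − m(s)) ≥ (4/7)(c(T) − μ(s))`.
-/

namespace StackMST

open Finset

open scoped Classical

variable {V : Type*}

def EdgeConn (E : Set (Sym2 V)) : V → V → Prop :=
  Relation.EqvGen fun a b => s(a, b) ∈ E

namespace EdgeConn

variable {E E' : Set (Sym2 V)} {a b d : V}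

theorem refl (a : V) : EdgeConn E a a := Relation.EqvGen.refl a

theorem symm (h : EdgeConn E a b) : EdgeConn E b a := Relation.EqvGen.symm _ _ h

theorem trans (h₁ : EdgeConn E a b) (h₂ : EdgeConn E b d) : EdgeConn E a d :=
  Relation.EqvGen.trans _ _ _ h₁ h₂

theorem of_mem (h : s(a, b) ∈ E) : EdgeConn E a b := Relation.EqvGen.rel _ _ h

theorem of_edges (hE : ∀ x y, s(x, y) ∈ E → EdgeConn E' x y) (h : EdgeConn E a b) :
    EdgeConn E' a b := by
  induction h with
  | rel x y hxy => exact hE x y hxy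
  | refl x => exact refl x
  | symm _ _ _ ih => exact ih.symm
  | trans _ _ _ _ _ ih₁ ih₂ => exact ih₁.trans ih₂

theorem mono (hE : E ⊆ E') (h : EdgeConn E a b) : EdgeConn E' a b :=
  h.of_edges fun _ _ hxy => of_mem (hE hxy)

theorem apply_eq {α : Type*} {f : V → α} (hf : ∀ x y, s(x, y) ∈ E → f x = f y)
    (h : EdgeConn E a b) : f a = f b := by
  induction h with
  | rel x y hxy => exact hf x y hxy
  | refl => rfl
  | symm _ _ _ ih => exact ih.symm
  | trans _ _ _ _ _ ih₁ ih₂ => exact ih₁.trans ih₂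

theorem reachable (h : EdgeConn E a b) : (SimpleGraph.fromEdgeSet E).Reachable a b := by
  induction h with
  | rel x y hxy =>
    by_cases hxy' : x = y
    · exact hxy' ▸ SimpleGraph.Reachable.refl x
    · exact SimpleGraph.Adj.reachable ((SimpleGraph.fromEdgeSet_adj _).mpr ⟨hxy, hxy'⟩)
  | refl x => exact SimpleGraph.Reachable.refl x
  | symm _ _ _ ih => exact ih.symm
  | trans _ _ _ _ _ ih₁ ih₂ => exact ih₁.trans ih₂

end EdgeConn

theorem _root_.SimpleGraph.Reachable.edgeConn {G : SimpleGraph V} {u v : V}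
    (h : G.Reachable u v) : EdgeConn G.edgeSet u v := by
  obtain ⟨p⟩ := h
  induction p with
  | nil => exact EdgeConn.refl _
  | cons h _ ih => exact (EdgeConn.of_mem (G.mem_edgeSet.mpr h)).trans ih

theorem _root_.SimpleGraph.IsAcyclic.not_adj_of_adj_of_adj {G : SimpleGraph V}
    (hG : G.IsAcyclic) {a b d : V} (hab : G.Adj a b) (hbd : G.Adj b d) : ¬ G.Adj a d := by
  intro had
  have hp : (SimpleGraph.Walk.cons had .nil).IsPath := by
    simp [SimpleGraph.Walk.isPath_def, had.ne]
  have hq : (SimpleGraph.Walk.cons hab (.cons hbd .nil)).IsPath := by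
    simp [SimpleGraph.Walk.isPath_def, hab.ne, hbd.ne, had.ne]
  simpa using congrArg (fun p : G.Path a d => p.1.length)
    ((hG.subsingleton_path a d).elim ⟨_, hp⟩ ⟨_, hq⟩)

theorem exists_mem_edgeSet_of_connected {T : SimpleGraph V} (hT : T.Connected)
    (hE : T.edgeSet.Nonempty) (v : V) : ∃ e ∈ T.edgeSet, v ∈ e := by
  obtain ⟨e, he⟩ := hE
  induction e using Sym2.ind with | _ a b =>
  have : Nontrivial V := ⟨a, b, (T.mem_edgeSet.mp he).ne⟩
  obtain ⟨u, hu⟩ := hT.preconnected.exists_adj_of_nontrivial v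
  exact ⟨s(v, u), hu, Sym2.mem_mk_left v u⟩

section Colouring

variable {α : Type*}

noncomputable def crossing (col : V → α) (E : Finset (Sym2 V)) : Finset (Sym2 V) :=
  E.filter fun e => ¬ (e.map col).IsDiag

theorem mk_mem_crossing {col : V → α} {E : Finset (Sym2 V)} {a b : V} :
    s(a, b) ∈ crossing col E ↔ s(a, b) ∈ E ∧ col a ≠ col b := by
  simp [crossing, Sym2.mk_isDiag_iff]

theorem mk_mem_sdiff_crossing {col : V → α} {E : Finset (Sym2 V)} {a b : V} :
    s(a, b) ∈ E \ crossing col E ↔ s(a, b) ∈ E ∧ col a = col b := by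
  simp only [crossing, mem_sdiff, mem_filter, Sym2.map_mk, Sym2.mk_isDiag_iff]
  tauto

theorem crossing_comp_subset {β : Type*} (g : α → β) (col : V → α) (E : Finset (Sym2 V)) :
    crossing (g ∘ col) E ⊆ crossing col E := by
  intro e he
  simp only [crossing, mem_filter, ← Sym2.map_map] at he ⊢
  exact ⟨he.1, fun hd => he.2 hd.map⟩

noncomputable def merge (col : V → α) (a b : V) : V → α :=
  (fun k => if k = col a then col b else k) ∘ col

theorem merge_left (col : V → α) (a b : V) : merge col a b a = merge col a b b := by
  by_cases h : col b = col a <;> simp [merge, h]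

theorem merge_eq_merge {col : V → α} {a b u v : V} (h : merge col a b u = merge col a b v)
    (huv : col u ≠ col v) :
    col u = col a ∧ col v = col b ∨ col u = col b ∧ col v = col a := by
  simp only [merge, Function.comp] at h
  split_ifs at h with hu hv hv
  · exact absurd (hu.trans hv.symm) huv
  · exact .inl ⟨hu, h.symm⟩
  · exact .inr ⟨h, hv⟩
  · exact absurd h huv

theorem card_image_merge [Fintype V] {col : V → α} {a b : V} (hab : col a ≠ col b) :
    #(univ.image (merge col a b)) + 1 = #(univ.image col) := by
  have himage : univ.image (merge col a b) = (univ.image col).erase (col a) := by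
    ext k
    simp only [merge, Function.comp, mem_image, mem_univ, true_and, mem_erase]
    constructor
    · rintro ⟨z, rfl⟩
      split_ifs with h
      · exact ⟨Ne.symm hab, b, rfl⟩
      · exact ⟨h, z, rfl⟩
    · rintro ⟨hk, z, rfl⟩
      exact ⟨z, if_neg hk⟩
  rw [himage, card_erase_add_one (mem_image_of_mem col (mem_univ a))]

theorem crossing_merge_subset (col : V → α) {a b : V} (E : Finset (Sym2 V)) :
    crossing (merge col a b) E ⊆ (crossing col E).erase s(a, b) := by
  intro e he
  refine mem_erase.mpr ⟨?_, crossing_comp_subset _ col E he⟩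
  rintro rfl
  exact (mk_mem_crossing.mp he).2 (merge_left col a b)

theorem card_image_le_card_crossing_add_one [Fintype V] {E : Finset (Sym2 V)}
    (hE : ∀ u v, EdgeConn (E : Set (Sym2 V)) u v) (col : V → α) :
    #(univ.image col) ≤ #(crossing col E) + 1 := by
  induction hn : #(univ.image col) using Nat.strong_induction_on generalizing col with
  | _ n ih =>
  obtain hn1 | hn1 := le_or_gt n 1
  · omega
  obtain ⟨_, ha, _, hb, hne⟩ := one_lt_card.mp (hn ▸ hn1)
  obtain ⟨a', -, rfl⟩ := mem_image.mp ha
  obtain ⟨b', -, rfl⟩ := mem_image.mp hb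
  obtain ⟨a, b, hab⟩ : ∃ a b, s(a, b) ∈ crossing col E := by
    by_contra! h
    refine hne (EdgeConn.apply_eq (fun x y hxy => ?_) (hE a' b'))
    by_contra hxy'
    exact h x y (mk_mem_crossing.mpr ⟨hxy, hxy'⟩)
  have hcard := card_image_merge (mk_mem_crossing.mp hab).2
  have := ih _ (by omega) (merge col a b) rfl
  have := card_le_card (crossing_merge_subset col (a := a) (b := b) E)
  rw [card_erase_of_mem hab] at this
  have := card_pos.mpr ⟨_, hab⟩
  omega

theorem crossing_merge_eq_erase {col : V → α} {E : Finset (Sym2 V)} {x y : V}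
    (hxy : s(x, y) ∈ crossing col E)
    (hbridge : ¬ EdgeConn (E.erase s(x, y) : Set (Sym2 V)) x y)
    (hclass : ∀ u v, col u = col v → EdgeConn (E \ crossing col E : Set (Sym2 V)) u v) :
    crossing (merge col x y) E = (crossing col E).erase s(x, y) := by
  refine (crossing_merge_subset col E).antisymm fun f hf => ?_
  obtain ⟨hfxy, hf⟩ := mem_erase.mp hf
  induction f using Sym2.ind with | _ u v =>
  obtain ⟨hfE, huv⟩ := mk_mem_crossing.mp hf
  refine mk_mem_crossing.mpr ⟨hfE, fun hm => hbridge ?_⟩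
  have hsub : (E \ crossing col E : Set (Sym2 V)) ⊆ (E.erase s(x, y) : Set (Sym2 V)) := by
    intro e he
    simp only [Set.mem_sdiff, mem_coe, coe_erase, Set.mem_singleton_iff] at he ⊢
    exact ⟨he.1, fun h => he.2 (h ▸ hxy)⟩
  have huvE : EdgeConn (E.erase s(x, y) : Set (Sym2 V)) u v :=
    EdgeConn.of_mem (mem_erase.mpr ⟨hfxy, hfE⟩)
  rcases merge_eq_merge hm huv with ⟨hux, hvy⟩ | ⟨huy, hvx⟩
  · exact ((hclass x u hux.symm).mono hsub).trans (huvE.trans ((hclass v y hvy).mono hsub))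
  · exact ((hclass x v hvx.symm).mono hsub).trans
      (huvE.symm.trans ((hclass u y huy).mono hsub))

theorem edgeConn_merge {col : V → α} {E : Finset (Sym2 V)} {x y : V} (hxy : s(x, y) ∈ E)
    (hclass : ∀ u v, col u = col v → EdgeConn (E \ crossing col E : Set (Sym2 V)) u v)
    {u v : V} (huv : merge col x y u = merge col x y v) :
    EdgeConn (E \ crossing (merge col x y) E : Set (Sym2 V)) u v := by
  have hmono : ∀ {a b : V}, col a = col b →
      EdgeConn (E \ crossing (merge col x y) E : Set (Sym2 V)) a b := fun hab =>
    (hclass _ _ hab).mono (Set.sdiff_subset_sdiff_right (crossing_comp_subset _ col E))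
  have hxy' : EdgeConn (E \ crossing (merge col x y) E : Set (Sym2 V)) x y :=
    EdgeConn.of_mem (by simpa using mk_mem_sdiff_crossing.mpr ⟨hxy, merge_left col x y⟩)
  by_cases h : col u = col v
  · exact hmono h
  rcases merge_eq_merge huv h with ⟨hux, hvy⟩ | ⟨huy, hvx⟩
  · exact (hmono hux).trans (hxy'.trans (hmono hvy.symm))
  · exact (hmono huy).trans (hxy'.symm.trans (hmono hvx.symm))

theorem card_crossing_add_one_le_card_image [Fintype V] [Nonempty V] {E : Finset (Sym2 V)}
    (hE : ∀ x y, s(x, y) ∈ E → ¬ EdgeConn (E.erase s(x, y) : Set (Sym2 V)) x y)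
    (col : V → α)
    (hclass : ∀ u v, col u = col v → EdgeConn (E \ crossing col E : Set (Sym2 V)) u v) :
    #(crossing col E) + 1 ≤ #(univ.image col) := by
  induction hn : #(crossing col E) using Nat.strong_induction_on generalizing col with
  | _ n ih =>
  obtain rfl | hn0 := Nat.eq_zero_or_pos n
  · exact card_pos.mpr (univ_nonempty.image col)
  obtain ⟨e, he⟩ := card_pos.mp (hn ▸ hn0)
  induction e using Sym2.ind with | _ x y =>
  have hxyE := (mk_mem_crossing.mp he).1
  have hcross := crossing_merge_eq_erase he (hE x y hxyE) hclass
  have := ih _ (by rw [← hn, hcross, card_erase_of_mem he]; omega) (merge col x y)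
    (fun u v huv => edgeConn_merge hxyE hclass huv) rfl
  have := card_image_merge (mk_mem_crossing.mp he).2
  rw [hcross, card_erase_of_mem he] at *
  omega

end Colouring

theorem sum_le_sum_of_card_filter_le {ι : Type*} (w : ι → ℝ) {A B : Finset ι}
    (hAB : #A = #B) (h : ∀ t, #(A.filter (t ≤ w ·)) ≤ #(B.filter (t ≤ w ·))) :
    ∑ e ∈ A, w e ≤ ∑ e ∈ B, w e := by
  induction hn : #A generalizing A B with
  | zero =>
    have hB : #B = 0 := hAB ▸ hn
    rw [card_eq_zero.mp hn, card_eq_zero.mp hB]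
  | succ n ih =>
    obtain ⟨a, haA, hamax⟩ := exists_max_image A w (card_pos.mp (by omega))
    have ha : a ∈ A.filter (w a ≤ w ·) := mem_filter.mpr ⟨haA, le_rfl⟩
    obtain ⟨b, hb⟩ := card_pos.mp ((card_pos.mpr ⟨a, ha⟩).trans_le (h (w a)))
    obtain ⟨hbB, hab⟩ := mem_filter.mp hb
    have herase : ∀ t, #((A.erase a).filter (t ≤ w ·)) ≤ #((B.erase b).filter (t ≤ w ·)) := by
      intro t
      rw [filter_erase, filter_erase]
      by_cases ht : t ≤ w a
      · rw [card_erase_of_mem (mem_filter.mpr ⟨haA, ht⟩),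
          card_erase_of_mem (mem_filter.mpr ⟨hbB, ht.trans hab⟩)]
        exact Nat.sub_le_sub_right (h t) 1
      · rw [filter_false_of_mem fun e he hte => ht (hte.trans (hamax e he))]
        simp
    have := ih (by rw [card_erase_of_mem haA, card_erase_of_mem hbB]; omega) herase
      (by rw [card_erase_of_mem haA]; omega)
    rw [← add_sum_erase A w haA, ← add_sum_erase B w hbB]
    linarith

section Support

variable {W₁ W₂ : Finset V} {E₁ E₂ : Finset (Sym2 V)}

theorem disjoint_of_forall_mem (h₁ : ∀ e ∈ E₁, ∀ v ∈ e, v ∈ W₁) (h₂ : ∀ e ∈ E₂, ∀ v ∈ e, v ∈ W₂)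
    (hd : Disjoint W₁ W₂) : Disjoint E₁ E₂ := by
  refine disjoint_left.mpr fun e he₁ he₂ => ?_
  induction e using Sym2.ind with | _ a b =>
  exact disjoint_left.mp hd (h₁ _ he₁ a (Sym2.mem_mk_left a b)) (h₂ _ he₂ a (Sym2.mem_mk_left a b))

theorem mk_notMem_union_of_forall_mem (h₁ : ∀ e ∈ E₁, ∀ v ∈ e, v ∈ W₁)
    (h₂ : ∀ e ∈ E₂, ∀ v ∈ e, v ∈ W₂) (hd : Disjoint W₁ W₂) {a b : V} (ha : a ∈ W₁)
    (hb : b ∈ W₂) : s(a, b) ∉ E₁ ∪ E₂ := by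
  intro h
  rcases mem_union.mp h with h | h
  · exact disjoint_left.mp hd (h₁ _ h b (Sym2.mem_mk_right a b)) hb
  · exact disjoint_left.mp hd ha (h₂ _ h a (Sym2.mem_mk_left a b))

end Support

/-- Trees on a finite vertex set `W ⊆ V`, grown from one vertex by attaching leaves; unlike
`SimpleGraph.IsTree`, this allows trees spanning only part of `V`. -/
inductive IsLeafTree : Finset V → Finset (Sym2 V) → Prop
  | single (v : V) : IsLeafTree {v} ∅
  | grow {W : Finset V} {E : Finset (Sym2 V)} {u v : V} (h : IsLeafTree W E) (hv : v ∈ W)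
      (hu : u ∉ W) : IsLeafTree (insert u W) (insert s(u, v) E)

namespace IsLeafTree

variable {W W₁ W₂ : Finset V} {E E₁ E₂ : Finset (Sym2 V)} {x y : V}

theorem nonempty (h : IsLeafTree W E) : W.Nonempty := by
  cases h with
  | single v => exact singleton_nonempty v
  | grow => exact insert_nonempty _ _

theorem mem_of_mem (h : IsLeafTree W E) {e : Sym2 V} (he : e ∈ E) (hx : x ∈ e) : x ∈ W := by
  induction h with
  | single v => simp at he
  | grow _ hv _ ih =>
    rcases mem_insert.mp he with rfl | he
    · rcases Sym2.mem_iff.mp hx with rfl | rfl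
      · exact mem_insert_self _ _
      · exact mem_insert_of_mem hv
    · exact mem_insert_of_mem (ih he)

theorem mk_notMem (h : IsLeafTree W E) (hx : x ∉ W) (y : V) : s(x, y) ∉ E :=
  fun he => hx (h.mem_of_mem he (Sym2.mem_mk_left x y))

theorem card_eq (h : IsLeafTree W E) : #W = #E + 1 := by
  induction h with
  | single v => simp
  | grow h _ hu ih => rw [card_insert_of_notMem hu, card_insert_of_notMem (h.mk_notMem hu _), ih]

theorem edgeConn (h : IsLeafTree W E) {u v : V} (hu : u ∈ W) (hv : v ∈ W) :
    EdgeConn (E : Set (Sym2 V)) u v := by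
  induction h generalizing u v with
  | single w => rw [mem_singleton.mp hu, mem_singleton.mp hv]; exact EdgeConn.refl w
  | @grow W E a b _ hb _ ih =>
    have hsub : (E : Set (Sym2 V)) ⊆ (insert s(a, b) E : Finset (Sym2 V)) := by simp
    have hab : EdgeConn (insert s(a, b) E : Finset (Sym2 V)) a b :=
      EdgeConn.of_mem (mem_insert_self _ _)
    have hconn : ∀ z ∈ insert a W, EdgeConn (insert s(a, b) E : Finset (Sym2 V)) z b := by
      intro z hz
      rcases mem_insert.mp hz with rfl | hz
      · exact hab
      · exact (ih hz hb).mono hsub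
    exact (hconn u hu).trans (hconn v hv).symm

theorem disjoint (h₁ : IsLeafTree W₁ E₁) (h₂ : IsLeafTree W₂ E₂) (hd : Disjoint W₁ W₂) :
    Disjoint E₁ E₂ :=
  disjoint_of_forall_mem (fun _ he _ => h₁.mem_of_mem he) (fun _ he _ => h₂.mem_of_mem he) hd

theorem mk_notMem_union (h₁ : IsLeafTree W₁ E₁) (h₂ : IsLeafTree W₂ E₂) (hd : Disjoint W₁ W₂)
    (hx : x ∈ W₁) (hy : y ∈ W₂) : s(x, y) ∉ E₁ ∪ E₂ :=
  mk_notMem_union_of_forall_mem (fun _ he _ => h₁.mem_of_mem he)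
    (fun _ he _ => h₂.mem_of_mem he) hd hx hy

theorem exists_extend_of_edgeConn (hE : ∀ e ∈ E, ∀ x ∈ e, x ∈ W)
    (hconn : ∀ u ∈ W, ∀ v ∈ W, EdgeConn (E : Set (Sym2 V)) u v) {W' : Finset V}
    {E' : Finset (Sym2 V)} (h : IsLeafTree W' E') (hW' : W' ⊆ W) (hE' : E' ⊆ E) :
    ∃ E'' ⊆ E, IsLeafTree W E'' := by
  induction hn : #(W \ W') using Nat.strong_induction_on generalizing W' E' with
  | _ n ih =>
  by_cases hWW : W ⊆ W'
  · exact ⟨E', hE', subset_antisymm hW' hWW ▸ h⟩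
  obtain ⟨w, hw, hwW'⟩ := not_subset.mp hWW
  obtain ⟨u, hu⟩ := h.nonempty
  obtain ⟨a, b, hab, ha, hb⟩ : ∃ a b, s(a, b) ∈ E ∧ a ∉ W' ∧ b ∈ W' := by
    by_contra! hno
    have hside : ∀ x y, s(x, y) ∈ E → (x ∈ W') = (y ∈ W') := fun x y hxy =>
      propext ⟨fun hx => by_contra fun hy => hno y x (Sym2.eq_swap ▸ hxy) hy hx,
        fun hy => by_contra fun hx => hno x y hxy hx hy⟩
    exact hwW' ((hconn u (hW' hu) w hw).apply_eq hside ▸ hu)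
  have haW : a ∈ W := hE _ hab a (Sym2.mem_mk_left a b)
  have hlt : #(W \ insert a W') < n := by
    rw [← hn, sdiff_insert]
    exact card_erase_lt_of_mem (mem_sdiff.mpr ⟨haW, ha⟩)
  exact ih _ hlt (h.grow hb ha) (insert_subset haW hW') (insert_subset hab hE') rfl

theorem of_edgeConn (hE : ∀ e ∈ E, ∀ x ∈ e, x ∈ W)
    (hconn : ∀ u ∈ W, ∀ v ∈ W, EdgeConn (E : Set (Sym2 V)) u v) (hW : W.Nonempty)
    (hcard : #W = #E + 1) : IsLeafTree W E := by
  obtain ⟨v, hv⟩ := hW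
  obtain ⟨E', hE', h⟩ := exists_extend_of_edgeConn hE hconn (.single v)
    (singleton_subset_iff.mpr hv) (empty_subset _)
  rwa [eq_of_subset_of_card_le hE' (by have := h.card_eq; omega)] at h

/-- Every edge of a tree is a bridge: otherwise the remaining `#W - 2` edges would still
connect `W`. -/
theorem not_edgeConn_erase (h : IsLeafTree W E) (hxy : s(x, y) ∈ E) :
    ¬ EdgeConn (E.erase s(x, y) : Set (Sym2 V)) x y := by
  intro hconn
  have hconn' : ∀ u ∈ W, ∀ v ∈ W, EdgeConn (E.erase s(x, y) : Set (Sym2 V)) u v := by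
    refine fun u hu v hv => (h.edgeConn hu hv).of_edges fun a b hab => ?_
    by_cases he : s(a, b) = s(x, y)
    · rcases Sym2.eq_iff.mp he with ⟨rfl, rfl⟩ | ⟨rfl, rfl⟩
      exacts [hconn, hconn.symm]
    · exact EdgeConn.of_mem (mem_erase.mpr ⟨he, hab⟩)
  obtain ⟨E', hE', h'⟩ := exists_extend_of_edgeConn
    (fun e he z hz => h.mem_of_mem (mem_of_mem_erase he) hz) hconn' (.single x)
    (singleton_subset_iff.mpr (h.mem_of_mem hxy (Sym2.mem_mk_left x y))) (empty_subset _)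
  have := card_le_card hE'
  have := card_pos.mpr ⟨_, hxy⟩
  rw [card_erase_of_mem hxy] at *
  have := h.card_eq
  have := h'.card_eq
  omega

theorem exists_split (h : IsLeafTree W E) {e : Sym2 V} (he : e ∈ E) :
    ∃ W₁ W₂ E₁ E₂ x y, IsLeafTree W₁ E₁ ∧ IsLeafTree W₂ E₂ ∧ Disjoint W₁ W₂ ∧
      W = W₁ ∪ W₂ ∧ E = insert e (E₁ ∪ E₂) ∧ e = s(x, y) ∧ x ∈ W₁ ∧ y ∈ W₂ := by
  induction h with
  | single v => simp at he
  | @grow W E u v h hv hu ih =>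
    rcases mem_insert.mp he with rfl | he
    · exact ⟨W, {u}, E, ∅, v, u, h, .single u, disjoint_singleton_right.mpr hu,
        by rw [union_comm, ← insert_eq], by simp, Sym2.eq_swap, hv, mem_singleton_self u⟩
    obtain ⟨W₁, W₂, E₁, E₂, x, y, h₁, h₂, hd, rfl, rfl, rfl, hx, hy⟩ := ih he
    rcases mem_union.mp hv with hv | hv
    · refine ⟨insert u W₁, W₂, insert s(u, v) E₁, E₂, x, y,
        h₁.grow hv fun h => hu (mem_union_left _ h), h₂,
        disjoint_insert_left.mpr ⟨fun h => hu (mem_union_right _ h), hd⟩,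
        (insert_union _ _ _).symm, ?_, rfl, mem_insert_of_mem hx, hy⟩
      rw [insert_union, insert_comm]
    · refine ⟨W₁, insert u W₂, E₁, insert s(u, v) E₂, x, y, h₁,
        h₂.grow hv fun h => hu (mem_union_right _ h),
        disjoint_insert_right.mpr ⟨fun h => hu (mem_union_left _ h), hd⟩,
        (union_insert _ _ _).symm, ?_, rfl, hx, mem_insert_of_mem hy⟩
      rw [union_insert, insert_comm]

theorem glue (h₁ : IsLeafTree W₁ E₁) (h₂ : IsLeafTree W₂ E₂) (hd : Disjoint W₁ W₂)
    (hx : x ∈ W₁) (hy : y ∈ W₂) : IsLeafTree (W₁ ∪ W₂) (insert s(x, y) (E₁ ∪ E₂)) := by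
  have hsub₁ : (E₁ : Set (Sym2 V)) ⊆ (insert s(x, y) (E₁ ∪ E₂) : Finset (Sym2 V)) := by
    intro e he; simp [mem_coe.mp he]
  have hsub₂ : (E₂ : Set (Sym2 V)) ⊆ (insert s(x, y) (E₁ ∪ E₂) : Finset (Sym2 V)) := by
    intro e he; simp [mem_coe.mp he]
  have hconn : ∀ u ∈ W₁ ∪ W₂,
      EdgeConn (insert s(x, y) (E₁ ∪ E₂) : Finset (Sym2 V)) u x := by
    intro u hu
    rcases mem_union.mp hu with hu | hu
    · exact (h₁.edgeConn hu hx).mono hsub₁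
    · exact ((h₂.edgeConn hu hy).mono hsub₂).trans (EdgeConn.of_mem (mem_insert_self _ _)).symm
  refine of_edgeConn (fun e he z hz => ?_) (fun u hu v hv => (hconn u hu).trans (hconn v hv).symm)
    (h₁.nonempty.mono subset_union_left) ?_
  · rcases mem_insert.mp he with rfl | he
    · rcases Sym2.mem_iff.mp hz with rfl | rfl
      exacts [mem_union_left _ hx, mem_union_right _ hy]
    rcases mem_union.mp he with he | he
    exacts [mem_union_left _ (h₁.mem_of_mem he hz), mem_union_right _ (h₂.mem_of_mem he hz)]
  · rw [card_union_of_disjoint hd, card_insert_of_notMem (h₁.mk_notMem_union h₂ hd hx hy),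
      card_union_of_disjoint (h₁.disjoint h₂ hd), h₁.card_eq, h₂.card_eq]
    ring

theorem edgeSet_fromEdgeSet (h : IsLeafTree W E) :
    (SimpleGraph.fromEdgeSet (E : Set (Sym2 V))).edgeSet = E := by
  ext e
  induction e using Sym2.ind with | _ a b =>
  simp only [SimpleGraph.edgeSet_fromEdgeSet, Set.mem_sdiff, mem_coe, Sym2.mem_diagSet,
    Sym2.mk_isDiag_iff, and_iff_left_iff_imp]
  rintro he rfl
  exact h.not_edgeConn_erase he (EdgeConn.refl a)

theorem isTree_fromEdgeSet [Fintype V] (h : IsLeafTree univ E) :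
    (SimpleGraph.fromEdgeSet (E : Set (Sym2 V))).IsTree := by
  have : Nonempty V := ⟨h.nonempty.choose⟩
  refine SimpleGraph.isTree_iff_connected_and_card.mpr ⟨?_, ?_⟩
  · refine (SimpleGraph.connected_iff _).mpr ⟨fun u v => ?_, inferInstance⟩
    exact (h.edgeConn (mem_univ u) (mem_univ v)).reachable
  · rw [h.edgeSet_fromEdgeSet, Nat.card_coe_set_eq, Set.ncard_coe_finset,
      Nat.card_eq_fintype_card, ← card_univ, h.card_eq]

end IsLeafTree

theorem _root_.SimpleGraph.IsTree.isLeafTree [Fintype V] {G : SimpleGraph V} [Fintype G.edgeSet]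
    (hG : G.IsTree) : IsLeafTree univ G.edgeFinset := by
  have : Nonempty V := hG.connected.nonempty
  refine .of_edgeConn (fun _ _ x _ => mem_univ x) (fun u _ v _ => ?_) univ_nonempty ?_
  · simpa using (hG.connected.preconnected u v).edgeConn
  · rw [card_univ, ← hG.card_edgeFinset]

namespace IsLeafTree

variable [Fintype V] {E : Finset (Sym2 V)} {G M : SimpleGraph V} [Fintype M.edgeSet]

/-- Counting argument for a threshold `t`: the components of the light tree edges are joined by
exactly the heavy tree edges, and `M` needs at least as many heavy edges to join them. -/
theorem card_filter_le_le_card_filter_le (h : IsLeafTree univ E) (w : Sym2 V → ℝ)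
    (hG : ∀ x y, G.Adj x y → EdgeConn {f | f ∈ E ∧ w f ≤ w s(x, y)} x y)
    (hMG : M ≤ G) (hM : M.Connected) (t : ℝ) :
    #(E.filter (t ≤ w ·)) ≤ #(M.edgeFinset.filter (t ≤ w ·)) := by
  have : Nonempty V := hM.nonempty
  let L : Set (Sym2 V) := {f | f ∈ E ∧ w f < t}
  let col : V → Quot fun a b => s(a, b) ∈ L := Quot.mk _
  have hcol : ∀ {a b}, col a = col b ↔ EdgeConn L a b := Quot.eq
  have hheavy : E.filter (t ≤ w ·) = crossing col E := by
    ext e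
    induction e using Sym2.ind with | _ a b =>
    rw [mem_filter, mk_mem_crossing, ne_eq, hcol]
    refine and_congr_right fun he => ⟨fun ht hL => h.not_edgeConn_erase he (hL.mono ?_),
      fun hL => not_lt.mp fun ht => hL (EdgeConn.of_mem ⟨he, ht⟩)⟩
    rintro f ⟨hf, hft⟩
    exact mem_erase.mpr ⟨by rintro rfl; linarith, hf⟩
  have hclass : ∀ u v, col u = col v → EdgeConn (E \ crossing col E : Set (Sym2 V)) u v := by
    refine fun u v huv => (hcol.mp huv).of_edges fun a b hab => EdgeConn.of_mem ?_
    exact ⟨hab.1, fun hx => (mk_mem_crossing.mp hx).2 (hcol.mpr (EdgeConn.of_mem hab))⟩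
  have hMheavy : crossing col M.edgeFinset ⊆ M.edgeFinset.filter (t ≤ w ·) := by
    intro e he
    induction e using Sym2.ind with | _ a b =>
    obtain ⟨heM, hab⟩ := mk_mem_crossing.mp he
    refine mem_filter.mpr ⟨heM, not_lt.mp fun ht => hab (hcol.mpr ?_)⟩
    refine (hG a b (hMG (SimpleGraph.mem_edgeFinset.mp heM))).mono ?_
    rintro f ⟨hf, hfw⟩
    exact ⟨hf, hfw.trans_lt ht⟩
  have hMconn : ∀ u v, EdgeConn (M.edgeFinset : Set (Sym2 V)) u v := fun u v => by
    simpa using (hM.preconnected u v).edgeConn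
  have h₁ := card_crossing_add_one_le_card_image (fun x y => h.not_edgeConn_erase) col hclass
  have h₂ := card_image_le_card_crossing_add_one hMconn col
  have h₃ := card_le_card hMheavy
  rw [hheavy]
  omega

/-- The cycle property of minimum spanning trees. -/
theorem sum_le_of_forall_edgeConn (h : IsLeafTree univ E) (w : Sym2 V → ℝ)
    (hG : ∀ x y, G.Adj x y → EdgeConn {f | f ∈ E ∧ w f ≤ w s(x, y)} x y)
    (hMG : M ≤ G) (hM : M.IsTree) :
    ∑ e ∈ E, w e ≤ ∑ e ∈ M.edgeFinset, w e := by
  have hcard := h.card_eq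
  have := hM.card_edgeFinset
  rw [card_univ] at hcard
  exact sum_le_sum_of_card_filter_le w (by omega)
    (h.card_filter_le_le_card_filter_le w hG hMG hM.connected)

end IsLeafTree

section Game

variable {T : SimpleGraph V} {c : Sym2 V → ℝ}

theorem esum_coe_finset (w : Sym2 V → ℝ) (s : Finset (Sym2 V)) : esum w s = ∑ e ∈ s, w e :=
  finsum_mem_coe_finset w s

theorem esum_nonneg {w : Sym2 V → ℝ} {s : Set (Sym2 V)} (h : ∀ e ∈ s, 0 ≤ w e) :
    0 ≤ esum w s :=
  finsum_nonneg fun e => finsum_nonneg fun he => h e he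

theorem weight_eq_sum (T : SimpleGraph V) (c p : Sym2 V → ℝ) (M : SimpleGraph V)
    [Fintype M.edgeSet] :
    weight T c p M = ∑ e ∈ M.edgeFinset, if e ∈ T.edgeSet then c e else p e := by
  rw [sum_ite, weight, ← esum_coe_finset, ← esum_coe_finset]
  congr 2 <;> ext e <;> simp

theorem weight_self (T : SimpleGraph V) (c p : Sym2 V → ℝ) : weight T c p T = redCost T c := by
  rw [weight, redCost, Set.inter_self, Set.sdiff_self, add_eq_left]
  exact finsum_mem_empty

theorem redCost_eq_sum [Fintype V] (T : SimpleGraph V) (c : Sym2 V → ℝ) :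
    redCost T c = ∑ e ∈ T.edgeFinset, c e := by
  rw [← esum_coe_finset, SimpleGraph.coe_edgeFinset, redCost]

theorem blueRevenue_le_redCost (hT : T.IsTree) (hc : ∀ e ∈ T.edgeSet, 0 ≤ c e)
    {F : SimpleGraph V} {p : Sym2 V → ℝ} {M : SimpleGraph V}
    (hmin : ∀ M', IsSpanningTreeOf (T ⊔ F) M' → weight T c p M ≤ weight T c p M') :
    blueRevenue T p M ≤ redCost T c := by
  have hred : 0 ≤ esum c (M.edgeSet ∩ T.edgeSet) := esum_nonneg fun e he => hc e he.2
  have hT' := hmin T ⟨le_sup_left, hT⟩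
  rw [weight_self, weight] at hT'
  rw [blueRevenue]
  linarith

theorem followerRevenue_le_redCost (hT : T.IsTree) (hc : ∀ e ∈ T.edgeSet, 0 ≤ c e)
    (F : SimpleGraph V) (p : Sym2 V → ℝ) : followerRevenue T c F p ≤ redCost T c := by
  refine Real.sSup_le ?_ (esum_nonneg hc)
  rintro r ⟨M, -, hmin, rfl⟩
  exact blueRevenue_le_redCost hT hc hmin

theorem blueRevenue_le_optRevenue (hT : T.IsTree) (hc : ∀ e ∈ T.edgeSet, 0 ≤ c e)
    {F : SimpleGraph V} (hF : IsBlueSet T F) {p : Sym2 V → ℝ} (hp : ∀ e ∈ F.edgeSet, 0 ≤ p e)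
    {M : SimpleGraph V} (hM : IsSpanningTreeOf (T ⊔ F) M)
    (hmin : ∀ M', IsSpanningTreeOf (T ⊔ F) M' → weight T c p M ≤ weight T c p M') :
    blueRevenue T p M ≤ optRevenue T c := by
  have hfollow : blueRevenue T p M ≤ followerRevenue T c F p := by
    refine le_csSup ⟨redCost T c, ?_⟩ ⟨M, hM, hmin, rfl⟩
    rintro r ⟨M', -, hmin', rfl⟩
    exact blueRevenue_le_redCost hT hc hmin'
  refine hfollow.trans (le_csSup ⟨redCost T c, ?_⟩ ⟨F, p, hF, hp, rfl⟩)
  rintro r ⟨F', p', -, -, rfl⟩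
  exact followerRevenue_le_redCost hT hc F' p'

end Game

section PricedMST

variable [Fintype V] {T : SimpleGraph V} {c : Sym2 V → ℝ} {E : Finset (Sym2 V)}
  {p : Sym2 V → ℝ}

variable (T c E p) in
structure IsPricedMST : Prop where
  isLeafTree : IsLeafTree univ E
  nonneg : ∀ e ∈ E, 0 ≤ p e
  eq_cost : ∀ e ∈ E, e ∈ T.edgeSet → p e = c e
  edgeConn_le : ∀ x y, T.Adj x y → EdgeConn {f | f ∈ E ∧ p f ≤ c s(x, y)} x y

theorem IsPricedMST.weight_le (h : IsPricedMST T c E p) {M : SimpleGraph V}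
    (hM : IsSpanningTreeOf (T ⊔ .fromEdgeSet (E.filter (· ∉ T.edgeSet) : Set (Sym2 V))) M) :
    weight T c p (.fromEdgeSet E) ≤ weight T c p M := by
  have hE : (SimpleGraph.fromEdgeSet (E : Set (Sym2 V))).edgeFinset = E := coe_injective <| by
    rw [SimpleGraph.coe_edgeFinset, h.isLeafTree.edgeSet_fromEdgeSet]
  rw [weight_eq_sum, weight_eq_sum, hE]
  set w : Sym2 V → ℝ := fun e => if e ∈ T.edgeSet then c e else p e
  have hw : ∀ f ∈ E, w f = p f := fun f hf => by
    by_cases hfT : f ∈ T.edgeSet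
    · simp only [w, if_pos hfT, h.eq_cost f hf hfT]
    · simp only [w, if_neg hfT]
  refine h.isLeafTree.sum_le_of_forall_edgeConn w (fun x y hxy => ?_) hM.1 hM.2
  rcases (SimpleGraph.sup_adj _ _ _ _).mp hxy with hxy | hxy
  · refine (h.edgeConn_le x y hxy).mono ?_
    rintro f ⟨hf, hfp⟩
    exact ⟨hf, by simpa [hw f hf, w, hxy] using hfp⟩
  · exact EdgeConn.of_mem ⟨(mem_filter.mp ((SimpleGraph.fromEdgeSet_adj _).mp hxy).1).1, le_rfl⟩

theorem IsPricedMST.sum_blue_le_optRevenue (hT : T.IsTree) (hc : ∀ e ∈ T.edgeSet, 0 ≤ c e)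
    (h : IsPricedMST T c E p) : ∑ e ∈ E.filter (· ∉ T.edgeSet), p e ≤ optRevenue T c := by
  set F := SimpleGraph.fromEdgeSet (E.filter (· ∉ T.edgeSet) : Set (Sym2 V))
  have hF : IsBlueSet T F := fun x y hxy =>
    ⟨hxy.ne, (mem_filter.mp ((SimpleGraph.fromEdgeSet_adj _).mp hxy).1).2⟩
  have hp : ∀ e ∈ F.edgeSet, 0 ≤ p e := fun e he =>
    h.nonneg e (mem_filter.mp (SimpleGraph.edgeSet_fromEdgeSet _ ▸ he).1).1
  have hle : SimpleGraph.fromEdgeSet E ≤ T ⊔ F := by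
    intro x y hxy
    obtain ⟨hE, hne⟩ := (SimpleGraph.fromEdgeSet_adj _).mp hxy
    by_cases hT : T.Adj x y
    · exact Or.inl hT
    · exact Or.inr ((SimpleGraph.fromEdgeSet_adj _).mpr ⟨mem_filter.mpr ⟨hE, hT⟩, hne⟩)
  have hrev : blueRevenue T p (.fromEdgeSet E) = ∑ e ∈ E.filter (· ∉ T.edgeSet), p e := by
    rw [blueRevenue, ← esum_coe_finset, h.isLeafTree.edgeSet_fromEdgeSet]
    congr 1
    ext e
    simp
  exact hrev ▸ blueRevenue_le_optRevenue hT hc hF hp ⟨hle, h.isLeafTree.isTree_fromEdgeSet⟩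
    fun _ => h.weight_le

end PricedMST

theorem exists_tieBreakingKey [Finite V] (c : Sym2 V → ℝ) :
    ∃ key : Sym2 V → ℝ ×ₗ ℕ, Function.Injective key ∧ ∀ e f, key e ≤ key f → c e ≤ c f := by
  obtain ⟨ι, hι⟩ := Countable.exists_injective_nat (Sym2 V)
  refine ⟨fun e => toLex (c e, ι e), fun e f h => hι (congrArg Prod.snd (toLex.injective h)),
    fun e f h => ?_⟩
  rcases Prod.Lex.le_iff.mp h with h | ⟨h, -⟩
  exacts [h.le, h.le]

section Kruskal

variable [Fintype V] {T : SimpleGraph V} {c : Sym2 V → ℝ} {κ : Type*} [LinearOrder κ]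
  {key : Sym2 V → κ}

noncomputable def innerEdges (T : SimpleGraph V) (W : Finset V) : Finset (Sym2 V) :=
  T.edgeFinset.filter fun e => ∀ x ∈ e, x ∈ W

theorem mem_innerEdges {W : Finset V} {e : Sym2 V} :
    e ∈ innerEdges T W ↔ e ∈ T.edgeSet ∧ ∀ x ∈ e, x ∈ W := by
  simp [innerEdges]

theorem innerEdges_univ (T : SimpleGraph V) : innerEdges T univ = T.edgeFinset := by
  ext e
  simp [mem_innerEdges]

theorem mem_of_mem_innerEdges {W : Finset V} {e : Sym2 V} (he : e ∈ innerEdges T W) {v : V}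
    (hv : v ∈ e) : v ∈ W :=
  (mem_innerEdges.mp he).2 v hv

theorem innerEdges_mono {W W' : Finset V} (h : W ⊆ W') : innerEdges T W ⊆ innerEdges T W' :=
  fun _ he =>
    mem_innerEdges.mpr ⟨(mem_innerEdges.mp he).1, fun _ hx => h (mem_of_mem_innerEdges he hx)⟩

theorem disjoint_innerEdges {W₁ W₂ : Finset V} (hd : Disjoint W₁ W₂) :
    Disjoint (innerEdges T W₁) (innerEdges T W₂) :=
  disjoint_of_forall_mem (fun _ he _ => mem_of_mem_innerEdges he)
    (fun _ he _ => mem_of_mem_innerEdges he) hd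

variable (T key) in
def IsLocalMinEdge (g : Sym2 V) : Prop :=
  ∀ e ∈ T.edgeSet, e ≠ g → (∃ x ∈ e, x ∈ g) → key g < key e

variable (T key) in
/-- `W` spans a component of the red edges lighter than some threshold: its red edges form a
tree, and every other red edge at `W` is heavier than all of them. -/
structure IsKeyComponent (W : Finset V) : Prop where
  isLeafTree : IsLeafTree W (innerEdges T W)
  lt_of_notMem : ∀ e ∈ T.edgeSet, e ∉ innerEdges T W → (∃ x ∈ e, x ∈ W) →
    ∀ f ∈ innerEdges T W, key f < key e

variable (T c key) in
/-- The invariant of the Kruskal-type recursion on a key component `W`. -/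
structure IsKruskalPricing (W : Finset V) (E : Finset (Sym2 V)) (p : Sym2 V → ℝ) : Prop where
  isLeafTree : IsLeafTree W E
  nonneg : ∀ e ∈ E, 0 ≤ p e
  eq_cost : ∀ e ∈ E, e ∈ T.edgeSet → p e = c e
  le_cost : ∀ e ∈ E, ∃ f ∈ innerEdges T W, p e ≤ c f
  edgeConn_le : ∀ x y, s(x, y) ∈ innerEdges T W → EdgeConn {f | f ∈ E ∧ p f ≤ c s(x, y)} x y
  isLocalMinEdge : ∀ e ∈ E, e ∈ T.edgeSet → IsLocalMinEdge T key e
  sum_eq : ∑ e ∈ E, p e = ∑ f ∈ innerEdges T W, c f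

theorem IsKeyComponent.univ (hT : T.IsTree) : IsKeyComponent T key univ where
  isLeafTree := innerEdges_univ T ▸ hT.isLeafTree
  lt_of_notMem _ he he' := absurd (innerEdges_univ T ▸ SimpleGraph.mem_edgeFinset.mpr he) he'

theorem IsKeyComponent.isKruskalPricing {W : Finset V} (hW : IsKeyComponent T key W)
    (hc : ∀ e ∈ T.edgeSet, 0 ≤ c e) (h1 : #(innerEdges T W) ≤ 1) :
    IsKruskalPricing T c key W (innerEdges T W) c where
  isLeafTree := hW.isLeafTree
  nonneg e he := hc e (mem_innerEdges.mp he).1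
  eq_cost _ _ _ := rfl
  le_cost e he := ⟨e, he, le_rfl⟩
  edgeConn_le _ _ hxy := EdgeConn.of_mem ⟨hxy, le_rfl⟩
  isLocalMinEdge g hg _ e he hne := fun ⟨x, hxe, hxg⟩ =>
    hW.lt_of_notMem e he (fun he' => hne (card_le_one.mp h1 e he' g hg))
      ⟨x, hxe, mem_of_mem_innerEdges hg hxg⟩ g hg
  sum_eq := rfl

theorem IsKeyComponent.side_of_split {W W₁ W₂ : Finset V} {E₁ E₂ : Finset (Sym2 V)} {x y : V}
    (hW : IsKeyComponent T key W) (hkey : Function.Injective key)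
    (hmax : ∀ f ∈ innerEdges T W, key f ≤ key s(x, y))
    (h₁ : IsLeafTree W₁ E₁) (h₂ : IsLeafTree W₂ E₂) (hd : Disjoint W₁ W₂) (hWu : W = W₁ ∪ W₂)
    (hE : innerEdges T W = insert s(x, y) (E₁ ∪ E₂)) (hy : y ∈ W₂) :
    E₁ = innerEdges T W₁ ∧ IsKeyComponent T key W₁ := by
  have hE₁W : E₁ ⊆ innerEdges T W := fun f hf => hE ▸ mem_insert_of_mem (mem_union_left _ hf)
  have hyW₁ : y ∉ W₁ := disjoint_right.mp hd hy
  have hE₁ : E₁ = innerEdges T W₁ := by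
    ext f
    refine ⟨fun hf => mem_innerEdges.mpr ⟨(mem_innerEdges.mp (hE₁W hf)).1,
      fun z hz => h₁.mem_of_mem hf hz⟩, fun hf => ?_⟩
    have hfW := innerEdges_mono (hWu ▸ subset_union_left) hf
    rw [hE] at hfW
    rcases mem_insert.mp hfW with rfl | hfW
    · exact absurd (mem_of_mem_innerEdges hf (Sym2.mem_mk_right x y)) hyW₁
    rcases mem_union.mp hfW with hfW | hfW
    · exact hfW
    induction f using Sym2.ind with | _ a b =>
    exact absurd (mem_of_mem_innerEdges hf (Sym2.mem_mk_left a b))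
      (disjoint_right.mp hd (h₂.mem_of_mem hfW (Sym2.mem_mk_left a b)))
  refine ⟨hE₁, ⟨hE₁ ▸ h₁, fun e he heW₁ ⟨z, hze, hzW₁⟩ f hf => ?_⟩⟩
  have hfW : f ∈ innerEdges T W := hE₁W (hE₁ ▸ hf)
  by_cases heW : e ∈ innerEdges T W
  · rw [hE] at heW
    rcases mem_insert.mp heW with rfl | heW
    · refine (hmax f hfW).lt_of_ne fun hfe => ?_
      rw [hkey hfe, ← hE₁] at hf
      exact hyW₁ (h₁.mem_of_mem hf (Sym2.mem_mk_right x y))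
    rcases mem_union.mp heW with heW | heW
    · exact absurd (hE₁ ▸ heW) heW₁
    · exact absurd (h₂.mem_of_mem heW hze) (disjoint_left.mp hd hzW₁)
  · exact hW.lt_of_notMem e he heW ⟨z, hze, hWu ▸ mem_union_left _ hzW₁⟩ f hfW

theorem IsKeyComponent.exists_split {W : Finset V} (hW : IsKeyComponent T key W)
    (hkey : Function.Injective key) {fs : Sym2 V} (hfs : fs ∈ innerEdges T W)
    (hmax : ∀ f ∈ innerEdges T W, key f ≤ key fs) :
    ∃ W₁ W₂ x y, IsKeyComponent T key W₁ ∧ IsKeyComponent T key W₂ ∧ Disjoint W₁ W₂ ∧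
      W = W₁ ∪ W₂ ∧ innerEdges T W = insert s(x, y) (innerEdges T W₁ ∪ innerEdges T W₂) ∧
      fs = s(x, y) ∧ x ∈ W₁ ∧ y ∈ W₂ := by
  obtain ⟨W₁, W₂, E₁, E₂, x, y, h₁, h₂, hd, hWu, hE, rfl, hx, hy⟩ :=
    hW.isLeafTree.exists_split hfs
  obtain ⟨hE₁, hW₁⟩ := hW.side_of_split hkey hmax h₁ h₂ hd hWu hE hy
  obtain ⟨hE₂, hW₂⟩ := hW.side_of_split hkey (Sym2.eq_swap (a := x) ▸ hmax) h₂ h₁ hd.symm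
    (hWu.trans (union_comm _ _)) (by rw [hE, union_comm, Sym2.eq_swap]) hx
  exact ⟨W₁, W₂, x, y, hW₁, hW₂, hd, hWu, hE₁ ▸ hE₂ ▸ hE, rfl, hx, hy⟩

theorem exists_blue_of_split {W₁ W₂ : Finset V} {x y : V} (hd : Disjoint W₁ W₂)
    (hinner : innerEdges T (W₁ ∪ W₂) = insert s(x, y) (innerEdges T W₁ ∪ innerEdges T W₂))
    (hx : x ∈ W₁) (hy : y ∈ W₂) (h3 : 3 ≤ #W₁ + #W₂) :
    ∃ a ∈ W₁, ∃ b ∈ W₂, s(a, b) ∉ T.edgeSet := by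
  obtain ⟨a, ha, b, hb, hne⟩ : ∃ a ∈ W₁, ∃ b ∈ W₂, ¬(a = x ∧ b = y) := by
    by_contra! h
    have h₁ := card_le_card fun a ha => mem_singleton.mpr (h a ha y hy).1
    have h₂ := card_le_card fun b hb => mem_singleton.mpr (h x hx b hb).2
    simp only [card_singleton] at h₁ h₂
    omega
  refine ⟨a, ha, b, hb, fun hab => ?_⟩
  have habW : s(a, b) ∈ innerEdges T (W₁ ∪ W₂) := by
    refine mem_innerEdges.mpr ⟨hab, fun z hz => ?_⟩
    rcases Sym2.mem_iff.mp hz with rfl | rfl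
    exacts [mem_union_left _ ha, mem_union_right _ hb]
  rw [hinner] at habW
  rcases mem_insert.mp habW with h | h
  · rcases Sym2.eq_iff.mp h with h | ⟨rfl, -⟩
    exacts [hne h, disjoint_left.mp hd ha hy]
  rcases mem_union.mp h with h | h
  · exact disjoint_left.mp hd (mem_of_mem_innerEdges h (Sym2.mem_mk_right a b)) hb
  · exact disjoint_left.mp hd ha (mem_of_mem_innerEdges h (Sym2.mem_mk_left a b))

theorem IsKruskalPricing.join {W₁ W₂ : Finset V} {E₁ E₂ : Finset (Sym2 V)}
    {p₁ p₂ p : Sym2 V → ℝ} {x y a b : V}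
    (h₁ : IsKruskalPricing T c key W₁ E₁ p₁) (h₂ : IsKruskalPricing T c key W₂ E₂ p₂)
    (hc : ∀ e ∈ T.edgeSet, 0 ≤ c e) (hd : Disjoint W₁ W₂)
    (hinner : innerEdges T (W₁ ∪ W₂) = insert s(x, y) (innerEdges T W₁ ∪ innerEdges T W₂))
    (hx : x ∈ W₁) (hy : y ∈ W₂) (hmax : ∀ f ∈ innerEdges T (W₁ ∪ W₂), c f ≤ c s(x, y))
    (ha : a ∈ W₁) (hb : b ∈ W₂) (hab : s(a, b) ∉ T.edgeSet)
    (hp₁ : ∀ e ∈ E₁, p e = p₁ e) (hp₂ : ∀ e ∈ E₂, p e = p₂ e) (hpab : p s(a, b) = c s(x, y)) :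
    IsKruskalPricing T c key (W₁ ∪ W₂) (insert s(a, b) (E₁ ∪ E₂)) p := by
  have hxy : s(x, y) ∈ innerEdges T (W₁ ∪ W₂) := hinner ▸ mem_insert_self _ _
  have htree := h₁.isLeafTree.glue h₂.isLeafTree hd ha hb
  have hle : ∀ e ∈ insert s(a, b) (E₁ ∪ E₂), ∃ f ∈ innerEdges T (W₁ ∪ W₂), p e ≤ c f := by
    refine (forall_mem_insert _ _ _).mpr ⟨⟨_, hxy, hpab.le⟩, forall_mem_union.mpr ⟨?_, ?_⟩⟩
    · intro e he
      obtain ⟨f, hf, hfe⟩ := h₁.le_cost e he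
      exact ⟨f, innerEdges_mono subset_union_left hf, hp₁ e he ▸ hfe⟩
    · intro e he
      obtain ⟨f, hf, hfe⟩ := h₂.le_cost e he
      exact ⟨f, innerEdges_mono subset_union_right hf, hp₂ e he ▸ hfe⟩
  refine ⟨htree, ?_, ?_, hle, ?_, ?_, ?_⟩
  · refine (forall_mem_insert _ _ _).mpr ⟨hpab ▸ hc _ (mem_innerEdges.mp hxy).1,
      forall_mem_union.mpr ⟨fun e he => ?_, fun e he => ?_⟩⟩
    exacts [hp₁ e he ▸ h₁.nonneg e he, hp₂ e he ▸ h₂.nonneg e he]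
  · refine (forall_mem_insert _ _ _).mpr ⟨fun h => absurd h hab,
      forall_mem_union.mpr ⟨fun e he heT => ?_, fun e he heT => ?_⟩⟩
    exacts [(hp₁ e he).trans (h₁.eq_cost e he heT), (hp₂ e he).trans (h₂.eq_cost e he heT)]
  · intro u v huv
    rw [hinner] at huv
    rcases mem_insert.mp huv with huv | huv
    · have hu := mem_of_mem_innerEdges hxy (huv ▸ Sym2.mem_mk_left u v)
      have hv := mem_of_mem_innerEdges hxy (huv ▸ Sym2.mem_mk_right u v)
      refine (htree.edgeConn hu hv).mono fun e he => ⟨he, ?_⟩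
      obtain ⟨f, hf, hfe⟩ := hle e he
      exact huv ▸ hfe.trans (hmax f hf)
    rcases mem_union.mp huv with huv | huv
    · refine (h₁.edgeConn_le u v huv).mono ?_
      rintro e ⟨he, hpe⟩
      exact ⟨mem_insert_of_mem (mem_union_left _ he), hp₁ e he ▸ hpe⟩
    · refine (h₂.edgeConn_le u v huv).mono ?_
      rintro e ⟨he, hpe⟩
      exact ⟨mem_insert_of_mem (mem_union_right _ he), hp₂ e he ▸ hpe⟩
  · exact (forall_mem_insert _ _ _).mpr ⟨fun h => absurd h hab,
      forall_mem_union.mpr ⟨h₁.isLocalMinEdge, h₂.isLocalMinEdge⟩⟩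
  · rw [sum_insert (h₁.isLeafTree.mk_notMem_union h₂.isLeafTree hd ha hb),
      sum_union (h₁.isLeafTree.disjoint h₂.isLeafTree hd), hinner,
      sum_insert (mk_notMem_union_of_forall_mem (fun _ he _ => mem_of_mem_innerEdges he)
        (fun _ he _ => mem_of_mem_innerEdges he) hd hx hy),
      sum_union (disjoint_innerEdges hd), ← h₁.sum_eq, ← h₂.sum_eq, hpab,
      sum_congr rfl hp₁, sum_congr rfl hp₂]

theorem IsKeyComponent.exists_isKruskalPricing (hkey : Function.Injective key)
    (hmono : ∀ e f, key e ≤ key f → c e ≤ c f) (hc : ∀ e ∈ T.edgeSet, 0 ≤ c e) {W : Finset V}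
    (hW : IsKeyComponent T key W) : ∃ E p, IsKruskalPricing T c key W E p := by
  induction hn : #W using Nat.strong_induction_on generalizing W with
  | _ n ih =>
  by_cases h1 : #(innerEdges T W) ≤ 1
  · exact ⟨_, _, hW.isKruskalPricing hc h1⟩
  obtain ⟨fs, hfs, hmax⟩ := exists_max_image (innerEdges T W) key (card_pos.mp (by omega))
  obtain ⟨W₁, W₂, x, y, hW₁, hW₂, hd, rfl, hinner, rfl, hx, hy⟩ :=
    hW.exists_split hkey hfs hmax
  have hcard := card_union_of_disjoint hd
  have := card_pos.mpr hW₁.isLeafTree.nonempty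
  have := card_pos.mpr hW₂.isLeafTree.nonempty
  have := hW.isLeafTree.card_eq
  obtain ⟨E₁, p₁, h₁⟩ := ih _ (by omega) hW₁ rfl
  obtain ⟨E₂, p₂, h₂⟩ := ih _ (by omega) hW₂ rfl
  obtain ⟨a, ha, b, hb, hab⟩ := exists_blue_of_split hd hinner hx hy (by omega)
  have hE₁₂ := h₁.isLeafTree.disjoint h₂.isLeafTree hd
  refine ⟨_, E₁.piecewise p₁ (E₂.piecewise p₂ fun _ => c s(x, y)),
    h₁.join h₂ hc hd hinner hx hy (fun f hf => hmono f _ (hmax f hf)) ha hb hab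
      (fun e he => piecewise_eq_of_mem _ _ _ he) (fun e he => ?_) ?_⟩
  · rw [piecewise_eq_of_notMem _ _ _ (disjoint_right.mp hE₁₂ he), piecewise_eq_of_mem _ _ _ he]
  · have habE := h₁.isLeafTree.mk_notMem_union h₂.isLeafTree hd ha hb
    rw [piecewise_eq_of_notMem _ _ _ fun h => habE (mem_union_left _ h),
      piecewise_eq_of_notMem _ _ _ fun h => habE (mem_union_right _ h)]

theorem exists_isLocalMinEdge_sub_le_optRevenue (hT : T.IsTree) (hc : ∀ e ∈ T.edgeSet, 0 ≤ c e)
    (hkey : Function.Injective key) (hmono : ∀ e f, key e ≤ key f → c e ≤ c f) :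
    ∃ K ⊆ T.edgeFinset, (∀ g ∈ K, IsLocalMinEdge T key g) ∧
      redCost T c - ∑ g ∈ K, c g ≤ optRevenue T c := by
  obtain ⟨E, p, h⟩ := (IsKeyComponent.univ hT).exists_isKruskalPricing hkey hmono hc
  have hE : IsPricedMST T c E p := ⟨h.isLeafTree, h.nonneg, h.eq_cost, fun x y hxy =>
    h.edgeConn_le x y (by simpa [innerEdges_univ] using hxy)⟩
  refine ⟨E.filter (· ∈ T.edgeSet), fun e he => by simpa using (mem_filter.mp he).2,
    fun g hg => h.isLocalMinEdge g (mem_filter.mp hg).1 (mem_filter.mp hg).2, ?_⟩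
  have hsplit := sum_filter_add_sum_filter_not E (· ∈ T.edgeSet) p
  have hred : ∑ g ∈ E.filter (· ∈ T.edgeSet), p g = ∑ g ∈ E.filter (· ∈ T.edgeSet), c g :=
    sum_congr rfl fun g hg => h.eq_cost g (mem_filter.mp hg).1 (mem_filter.mp hg).2
  rw [h.sum_eq, innerEdges_univ, ← redCost_eq_sum, hred] at hsplit
  linarith [hE.sum_blue_le_optRevenue hT hc]

end Kruskal

section IncidentCost

variable {T : SimpleGraph V} {c : Sym2 V → ℝ}

noncomputable def minIncidentCost (T : SimpleGraph V) (c : Sym2 V → ℝ) (v : V) : ℝ :=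
  sInf {x | ∃ e ∈ T.edgeSet, v ∈ e ∧ x = c e}

theorem finite_incidentCosts [Finite V] (T : SimpleGraph V) (c : Sym2 V → ℝ) (v : V) :
    {x | ∃ e ∈ T.edgeSet, v ∈ e ∧ x = c e}.Finite :=
  ((Set.toFinite T.edgeSet).image c).subset fun _ ⟨e, he, _, hx⟩ => ⟨e, he, hx.symm⟩

theorem minIncidentCost_le [Finite V] {e : Sym2 V} (he : e ∈ T.edgeSet) {v : V} (hv : v ∈ e) :
    minIncidentCost T c v ≤ c e :=
  csInf_le (finite_incidentCosts T c v).bddBelow ⟨e, he, hv, rfl⟩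

theorem le_minIncidentCost {e : Sym2 V} (he : e ∈ T.edgeSet) {v : V} (hv : v ∈ e) {t : ℝ}
    (ht : ∀ f ∈ T.edgeSet, v ∈ f → t ≤ c f) : t ≤ minIncidentCost T c v :=
  le_csInf ⟨c e, e, he, hv, rfl⟩ fun _ ⟨f, hf, hvf, hx⟩ => hx ▸ ht f hf hvf

theorem minIncidentCost_eq_of_forall_le [Finite V] {e₀ : Sym2 V} (he₀ : e₀ ∈ T.edgeSet)
    (hmin : ∀ e ∈ T.edgeSet, c e₀ ≤ c e) {v : V} (hv : v ∈ e₀) : minIncidentCost T c v = c e₀ :=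
  (minIncidentCost_le he₀ hv).antisymm (le_minIncidentCost he₀ hv fun f hf _ => hmin f hf)

theorem minIncidentCost_nonneg (hc : ∀ e ∈ T.edgeSet, 0 ≤ c e) (v : V) :
    0 ≤ minIncidentCost T c v :=
  Real.sInf_nonneg fun _ ⟨e, he, _, hx⟩ => hx ▸ hc e he

theorem minIncidentCost_le_maxIncidentCost [Finite V] {e : Sym2 V} (he : e ∈ T.edgeSet) {v : V}
    (hv : v ∈ e) : minIncidentCost T c v ≤ maxIncidentCost T c v :=
  (minIncidentCost_le he hv).trans <|
    le_csSup (finite_incidentCosts T c v).bddAbove ⟨e, he, hv, rfl⟩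

theorem minIncidentCost_le_redCost [Finite V] (hc : ∀ e ∈ T.edgeSet, 0 ≤ c e) {e : Sym2 V}
    (he : e ∈ T.edgeSet) {v : V} (hv : v ∈ e) : minIncidentCost T c v ≤ redCost T c := by
  have := Fintype.ofFinite V
  rw [redCost_eq_sum]
  exact (minIncidentCost_le he hv).trans
    (single_le_sum (fun f hf => hc f (SimpleGraph.mem_edgeFinset.mp hf))
      (SimpleGraph.mem_edgeFinset.mpr he))

end IncidentCost

section Star

variable {T : SimpleGraph V} {c : Sym2 V → ℝ}

def parentEdge (s : V) (π : V → V) (v : {v // v ≠ s}) : Sym2 V := s(v.1, π v.1)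

theorem isLeafTree_image_parentEdge [Fintype V] {s : V} {π : V → V}
    (hinj : Function.Injective (parentEdge s π))
    (hconn : ∀ v, EdgeConn (univ.image (parentEdge s π) : Set (Sym2 V)) v s) :
    IsLeafTree univ (univ.image (parentEdge s π)) := by
  refine .of_edgeConn (fun _ _ x _ => mem_univ x)
    (fun u _ v _ => (hconn u).trans (hconn v).symm) ⟨s, mem_univ s⟩ ?_
  rw [card_image_of_injective _ hinj, card_univ, card_univ, Fintype.card_subtype_compl,
    Fintype.card_subtype_eq]
  have := Fintype.card_pos_iff.mpr ⟨s⟩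
  omega

theorem exists_eq_mk_of_isAcyclic (hT : T.IsAcyclic) {e : Sym2 V} (he : e ∈ T.edgeSet) (s : V) :
    ∃ o z, e = s(o, z) ∧ (z = s ∨ ¬ T.Adj s z) := by
  induction e using Sym2.ind with | _ a b =>
  by_cases hb : b = s ∨ ¬ T.Adj s b
  · exact ⟨a, b, rfl, hb⟩
  simp only [not_or, not_not] at hb
  exact ⟨b, a, Sym2.eq_swap, .inr fun hsa => hT.not_adj_of_adj_of_adj hsa he hb.2⟩

variable {s o z : V}

theorem ne_of_adj_of_eq_or_not_adj (hoz : T.Adj o z) (hz : z = s ∨ ¬ T.Adj s z) : o ≠ s := by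
  rintro rfl
  rcases hz with rfl | hz
  exacts [hoz.ne rfl, hz hoz]

/-- The parent of `v` in the star strategy at `s`, around the cheapest red edge `s(o, z)`; the
branches are chosen so that the edge from `o` is the only red parent edge. -/
noncomputable def starParent (T : SimpleGraph V) (s o z v : V) : V :=
  if v = o then z else if v = z ∨ ¬ T.Adj s v then s else if T.Adj v z then o else z

theorem starParent_mem (v : V) : starParent T s o z v = o ∨ starParent T s o z v = z ∨
    starParent T s o z v = s := by
  unfold starParent
  split_ifs <;> simp

theorem starParent_o : starParent T s o z o = z := by
  simp [starParent]

theorem starParent_z (hoz : T.Adj o z) : starParent T s o z z = s := by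
  simp [starParent, hoz.ne.symm]

theorem injective_parentEdge_starParent (hoz : T.Adj o z) :
    Function.Injective (parentEdge s (starParent T s o z)) := by
  rintro ⟨u, hu⟩ ⟨v, hv⟩ huv
  simp only [parentEdge, Sym2.eq_iff] at huv
  rcases huv with ⟨rfl, -⟩ | ⟨huv, hvu⟩
  · rfl
  have hchild : ∀ {a b}, a ≠ s → b ≠ s → a = starParent T s o z b → starParent T s o z a = b →
      a = o := by
    intro a b ha hb hab hba
    rcases starParent_mem (T := T) (s := s) (o := o) (z := z) b with h | h | h
    · exact hab.trans h
    · obtain rfl : a = z := hab.trans h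
      exact absurd (hba.symm.trans (starParent_z hoz)) hb
    · exact absurd (hab.trans h) ha
  exact Subtype.ext ((hchild hu hv huv hvu).trans (hchild hv hu hvu.symm huv.symm).symm)

theorem parentEdge_starParent_notMem (hT : T.IsAcyclic) (hoz : T.Adj o z)
    (hz : z = s ∨ ¬ T.Adj s z) {v : V} (hv : v ≠ s) (hvo : v ≠ o) :
    s(v, starParent T s o z v) ∉ T.edgeSet := by
  unfold starParent
  rw [if_neg hvo]
  split_ifs with h₁ h₂
  · rcases h₁ with rfl | h₁
    · rcases hz with rfl | hz
      exacts [absurd rfl hv, fun h => hz (T.mem_edgeSet.mp h).symm]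
    · exact fun h => h₁ (T.mem_edgeSet.mp h).symm
  · exact fun h => hT.not_adj_of_adj_of_adj (T.mem_edgeSet.mp h) hoz h₂
  · exact h₂

variable (T c s o z) in
noncomputable def starPrice : Sym2 V → ℝ :=
  Function.extend (parentEdge s (starParent T s o z)) (minIncidentCost T c ·) 0

theorem starPrice_parentEdge (hoz : T.Adj o z) (v : {v // v ≠ s}) :
    starPrice T c s o z (parentEdge s (starParent T s o z) v) = minIncidentCost T c v :=
  (injective_parentEdge_starParent hoz).extend_apply _ _ v

variable [Fintype V]

variable (T s o z) in
noncomputable def starEdges : Finset (Sym2 V) := univ.image (parentEdge s (starParent T s o z))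

theorem edgeConn_starEdges (hoz : T.Adj o z) (hz : z = s ∨ ¬ T.Adj s z)
    (hmin : ∀ e ∈ T.edgeSet, c s(o, z) ≤ c e) {t : ℝ} (ht : c s(o, z) ≤ t) {v : V}
    (hv : v ≠ s → minIncidentCost T c v ≤ t) :
    EdgeConn {f | f ∈ starEdges T s o z ∧ starPrice T c s o z f ≤ t} v s := by
  have hedge : ∀ u (hu : u ≠ s), minIncidentCost T c u ≤ t →
      EdgeConn {f | f ∈ starEdges T s o z ∧ starPrice T c s o z f ≤ t} u
        (starParent T s o z u) := fun u hu hmu =>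
    EdgeConn.of_mem ⟨mem_image_of_mem _ (mem_univ (⟨u, hu⟩ : {v // v ≠ s})),
      (starPrice_parentEdge hoz ⟨u, hu⟩).le.trans hmu⟩
  have hm : ∀ {u}, u ∈ s(o, z) → minIncidentCost T c u ≤ t := fun hu =>
    (minIncidentCost_eq_of_forall_le hoz hmin hu).le.trans ht
  have hzs : EdgeConn {f | f ∈ starEdges T s o z ∧ starPrice T c s o z f ≤ t} z s := by
    by_cases hzs : z = s
    · exact hzs ▸ EdgeConn.refl z
    · simpa only [starParent_z hoz] using hedge z hzs (hm (Sym2.mem_mk_right o z))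
  have hos : EdgeConn {f | f ∈ starEdges T s o z ∧ starPrice T c s o z f ≤ t} o s := by
    have hoz' := hedge o (ne_of_adj_of_eq_or_not_adj hoz hz) (hm (Sym2.mem_mk_left o z))
    rw [starParent_o] at hoz'
    exact hoz'.trans hzs
  by_cases hvs : v = s
  · exact hvs ▸ EdgeConn.refl v
  refine (hedge v hvs (hv hvs)).trans ?_
  rcases starParent_mem (T := T) (s := s) (o := o) (z := z) v with h | h | h <;> rw [h]
  exacts [hos, hzs, EdgeConn.refl s]

theorem isPricedMST_star (hT : T.IsAcyclic) (hc : ∀ e ∈ T.edgeSet, 0 ≤ c e)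
    (hoz : T.Adj o z) (hz : z = s ∨ ¬ T.Adj s z) (hmin : ∀ e ∈ T.edgeSet, c s(o, z) ≤ c e) :
    IsPricedMST T c (starEdges T s o z) (starPrice T c s o z) := by
  refine ⟨isLeafTree_image_parentEdge (injective_parentEdge_starParent hoz) fun v => ?_, ?_, ?_,
    fun x y hxy => ?_⟩
  · exact (edgeConn_starEdges hoz hz hmin (le_max_right _ _) fun _ => le_max_left _ _).mono
      fun f hf => hf.1
  · intro e he
    obtain ⟨v, -, rfl⟩ := mem_image.mp he
    exact starPrice_parentEdge hoz v ▸ minIncidentCost_nonneg hc v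
  · intro e he heT
    obtain ⟨⟨v, hv⟩, -, rfl⟩ := mem_image.mp he
    obtain rfl : v = o := by_contra fun hvo =>
      parentEdge_starParent_notMem hT hoz hz hv hvo heT
    rw [starPrice_parentEdge hoz, minIncidentCost_eq_of_forall_le hoz hmin (Sym2.mem_mk_left v z)]
    simp [parentEdge, starParent_o]
  · have hxy : s(x, y) ∈ T.edgeSet := hxy
    exact (edgeConn_starEdges hoz hz hmin (hmin _ hxy) fun _ =>
        minIncidentCost_le hxy (Sym2.mem_mk_left x y)).trans
      (edgeConn_starEdges hoz hz hmin (hmin _ hxy) fun _ =>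
        minIncidentCost_le hxy (Sym2.mem_mk_right x y)).symm

theorem sum_starPrice (hoz : T.Adj o z) :
    ∑ e ∈ starEdges T s o z, starPrice T c s o z e =
      ∑ v, minIncidentCost T c v - minIncidentCost T c s := by
  have hinj := injective_parentEdge_starParent (s := s) hoz
  rw [starEdges, sum_image fun u _ v _ huv => hinj huv, ← sum_erase_eq_sub (mem_univ s),
    sum_subtype (p := (· ≠ s)) _ (by simp)]
  exact sum_congr rfl fun v _ => starPrice_parentEdge hoz v

theorem filter_starEdges_mem_edgeSet (hT : T.IsAcyclic) (hoz : T.Adj o z)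
    (hz : z = s ∨ ¬ T.Adj s z) : (starEdges T s o z).filter (· ∈ T.edgeSet) = {s(o, z)} := by
  ext e
  simp only [starEdges, mem_filter, mem_image, mem_univ, true_and, mem_singleton]
  constructor
  · rintro ⟨⟨⟨v, hv⟩, rfl⟩, heT⟩
    obtain rfl : v = o := by_contra fun hvo =>
      parentEdge_starParent_notMem hT hoz hz hv hvo heT
    simp [parentEdge, starParent_o]
  · rintro rfl
    exact ⟨⟨⟨o, ne_of_adj_of_eq_or_not_adj hoz hz⟩, by simp [parentEdge, starParent_o]⟩, hoz⟩

theorem sum_minIncidentCost_sub_le_optRevenue (hT : T.IsTree)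
    (hc : ∀ e ∈ T.edgeSet, 0 ≤ c e) {e₀ : Sym2 V} (he₀ : e₀ ∈ T.edgeSet)
    (hmin : ∀ e ∈ T.edgeSet, c e₀ ≤ c e) (s : V) :
    ∑ v, minIncidentCost T c v - minIncidentCost T c s - c e₀ ≤ optRevenue T c := by
  obtain ⟨o, z, rfl, hz⟩ := exists_eq_mk_of_isAcyclic hT.isAcyclic he₀ s
  have h := isPricedMST_star hT.isAcyclic hc he₀ hz hmin
  have hsplit := sum_filter_add_sum_filter_not (starEdges T s o z) (· ∈ T.edgeSet)
    (starPrice T c s o z)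
  have hmem : s(o, z) ∈ starEdges T s o z :=
    (mem_filter.mp ((filter_starEdges_mem_edgeSet hT.isAcyclic he₀ hz).symm ▸
      mem_singleton_self _)).1
  rw [filter_starEdges_mem_edgeSet hT.isAcyclic he₀ hz, sum_singleton, h.eq_cost _ hmem he₀,
    sum_starPrice he₀] at hsplit
  linarith [h.sum_blue_le_optRevenue hT hc]

end Star

section Combination

variable {T : SimpleGraph V} {c : Sym2 V → ℝ} {κ : Type*} [LinearOrder κ] {key : Sym2 V → κ}

theorem minIncidentCost_eq_of_isLocalMinEdge [Finite V]
    (hmono : ∀ e f, key e ≤ key f → c e ≤ c f) {g : Sym2 V} (hg : g ∈ T.edgeSet)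
    (hloc : IsLocalMinEdge T key g) {v : V} (hv : v ∈ g) : minIncidentCost T c v = c g := by
  refine (minIncidentCost_le hg hv).antisymm (le_minIncidentCost hg hv fun e he hve => ?_)
  by_cases heg : e = g
  · rw [heg]
  · exact hmono _ _ (hloc e he heg ⟨v, hve, hv⟩).le

/-- Locally minimal red edges form a matching, and both ends of such an edge `g` have `m = c g`. -/
theorem two_mul_sum_le_sum_minIncidentCost [Fintype V] (hc : ∀ e ∈ T.edgeSet, 0 ≤ c e)
    (hmono : ∀ e f, key e ≤ key f → c e ≤ c f) {K : Finset (Sym2 V)} (hK : K ⊆ T.edgeFinset)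
    (hloc : ∀ g ∈ K, IsLocalMinEdge T key g) :
    2 * ∑ g ∈ K, c g ≤ ∑ v, minIncidentCost T c v := by
  have hred : ∀ g ∈ K, g ∈ T.edgeSet := fun g hg => SimpleGraph.mem_edgeFinset.mp (hK hg)
  have hends : ∀ g ∈ K, ∑ v ∈ g.toFinset, minIncidentCost T c v = 2 * c g := by
    intro g hg
    rw [sum_congr rfl fun v hv => minIncidentCost_eq_of_isLocalMinEdge hmono (hred g hg)
        (hloc g hg) (Sym2.mem_toFinset.mp hv), sum_const,
      Sym2.card_toFinset_of_not_isDiag _ (T.not_isDiag_of_mem_edgeSet (hred g hg)),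
      nsmul_eq_mul, Nat.cast_ofNat]
  have hdisj : (K : Set (Sym2 V)).PairwiseDisjoint Sym2.toFinset := by
    intro g hg g' hg' hne
    refine disjoint_left.mpr fun v hv hv' => ?_
    have hv := Sym2.mem_toFinset.mp hv
    have hv' := Sym2.mem_toFinset.mp hv'
    exact (hloc g hg g' (hred g' hg') (Ne.symm hne) ⟨v, hv', hv⟩).asymm
      (hloc g' hg' g (hred g hg) hne ⟨v, hv, hv'⟩)
  calc 2 * ∑ g ∈ K, c g = ∑ v ∈ K.biUnion Sym2.toFinset, minIncidentCost T c v := by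
        rw [sum_biUnion hdisj, mul_sum]
        exact sum_congr rfl fun g hg => (hends g hg).symm
    _ ≤ ∑ v, minIncidentCost T c v :=
        sum_le_sum_of_subset_of_nonneg (subset_univ _) fun v _ _ => minIncidentCost_nonneg hc v

theorem two_thirds_mul_le_optRevenue [Finite V] (hT : T.IsTree) (hE : T.edgeSet.Nonempty)
    (hc : ∀ e ∈ T.edgeSet, 0 ≤ c e) (s : V) :
    2 / 3 * (redCost T c - minIncidentCost T c s) ≤ optRevenue T c := by
  have := Fintype.ofFinite V
  obtain ⟨key, hkey, hmono⟩ := exists_tieBreakingKey c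
  obtain ⟨K, hK, hloc, hkruskal⟩ := exists_isLocalMinEdge_sub_le_optRevenue hT hc hkey hmono
  obtain ⟨e₀, he₀, hmin⟩ := exists_min_image T.edgeFinset c (by simpa using hE)
  simp only [SimpleGraph.mem_edgeFinset] at he₀ hmin
  have hstar := sum_minIncidentCost_sub_le_optRevenue hT hc he₀ hmin s
  have hmatch := two_mul_sum_le_sum_minIncidentCost hc hmono hK hloc
  obtain ⟨e, he, hse⟩ := exists_mem_edgeSet_of_connected hT.connected hE s
  have hs : c e₀ ≤ minIncidentCost T c s := le_minIncidentCost he hse fun f hf _ => hmin f hf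
  linarith

end Combination

end StackMST

open StackMST

/-- For the StackMST(0,0) game with red tree `T` (with at least
one edge) and nonnegative edge costs, for every vertex `s`,
`r*(T, c) ≥ (4/7)·(c(T) − μ(s))`, where `μ(s)` is the maximum cost of a red edge
incident to `s`. -/
theorem stackMST_lower_bound_via_mu {V : Type*} [Finite V]
    (T : SimpleGraph V) (hT : T.IsTree) (hE : T.edgeSet.Nonempty)
    (c : Sym2 V → ℝ) (hc : ∀ e ∈ T.edgeSet, 0 ≤ c e) :
    ∀ s : V, (4 / 7 : ℝ) * (redCost T c - maxIncidentCost T c s) ≤ optRevenue T c := by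
  intro s
  obtain ⟨e, he, hse⟩ := exists_mem_edgeSet_of_connected hT.connected hE s
  have hμ := minIncidentCost_le_maxIncidentCost (c := c) he hse
  have hcost := minIncidentCost_le_redCost hc he hse
  linarith [two_thirds_mul_le_optRevenue hT hE hc s]
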